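/- Let Ω be a nonempty set, Σ : Ω × Ω → ℝ with Σ(P,P) = 0 for all P, and n ≥ 1. For points write (P₀Pᵢ.P₀Pₖ) = Σ(Pᵢ,P₀) + Σ(P₀,Pₖ) − Σ(Pᵢ,Pₖ), and for m ≥ 1 and Q : Fin(m+1) → Ω let F_m(Q) = det((Q₀Qᵢ.Q₀Qₖ))_{i,k=1,…,m}. Then the following are equivalent. (A) There exist a bijection f : Ω → (Fin n → ℝ) and a symmetric invertible n×n real matrix γ such that Σ(P,Q) = ½ Σ_{i,k} γ_{ik}(f(P)ⁱ − f(Q)ⁱ)(f(P)ᵏ − f(Q)ᵏ) for all P,Q ∈ Ω, i.e. (Ω,Σ) is an n-dimensional Euclidean (or pseudo-Euclidean) space. (B) The σ-immanent conditions I–IV hold: (I) Σ(P,Q) = Σ(Q,P) for all P,Q; and there exists 𝒫 : Fin(n+1) → Ω such that (II) F_n(𝒫) ≠ 0 and F_{n+1}(Q) = 0 for every Q : Fin(n+2) → Ω; (III) with g the invertible n×n matrix g_{ik} = (𝒫₀𝒫ᵢ.𝒫₀𝒫ₖ), h = g⁻¹, and x : Ω → (Fin n → ℝ) given by x(P)ᵢ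 = (𝒫₀𝒫ᵢ.𝒫₀P), one has Σ(P,Q) = ½ Σ_{i,k} h^{ik}(x(P)ᵢ − x(Q)ᵢ)(x(P)ₖ − x(Q)ₖ) for all P,Q ∈ Ω; (IV) the map x : Ω → (Fin n → ℝ) is a bijection. (Theorem 2: the Σ-space is the n-dimensional Euclidean space iff the σ-immanent conditions I–IV are fulfilled.) -/

import Mathlib

open Matrix

/-- The scalar Σ-product `(P₀Pᵢ.P₀Pₖ) = Σ(Pᵢ,P₀) + Σ(P₀,Pₖ) − Σ(Pᵢ,Pₖ)`
of the vectors `P₀Pᵢ` and `P₀Pₖ` for a (symmetric) world function `W`. -/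
def wsp {Ω : Type} (W : Ω → Ω → ℝ) (P0 Pi Pk : Ω) : ℝ :=
  W Pi P0 + W P0 Pk - W Pi Pk

/-- `F_m(Q)`, the determinant of the `m × m` Gram-type matrix built from the
scalar Σ-products of the vectors `Q₀Qᵢ`, for `Q : Fin (m+1) → Ω`. -/
noncomputable def Fdet {Ω : Type} (W : Ω → Ω → ℝ) (m : ℕ) (Q : Fin (m + 1) → Ω) : ℝ :=
  Matrix.det (Matrix.of fun i k : Fin m => wsp W (Q 0) (Q i.succ) (Q k.succ))

section Aux

variable {n : ℕ} {Ω : Type}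

lemma dsum_eq (γ : Matrix (Fin n) (Fin n) ℝ) (u v : Fin n → ℝ) :
    ∑ i, ∑ k, γ i k * u i * v k = u ⬝ᵥ γ.mulVec v := by
  simp only [dotProduct, Matrix.mulVec, Finset.mul_sum]
  exact Finset.sum_congr rfl fun i _ => Finset.sum_congr rfl fun k _ => by ring

lemma q_comm (γ : Matrix (Fin n) (Fin n) ℝ) (hs : γ.IsSymm) (u v : Fin n → ℝ) :
    u ⬝ᵥ γ.mulVec v = v ⬝ᵥ γ.mulVec u := by
  rw [Matrix.dotProduct_mulVec]
  conv_lhs => rw [← hs]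
  rw [Matrix.vecMul_transpose, dotProduct_comm]

lemma wsp_eq (W : Ω → Ω → ℝ) (f : Ω → (Fin n → ℝ)) (γ : Matrix (Fin n) (Fin n) ℝ)
    (hs : γ.IsSymm)
    (hW : ∀ P Q, W P Q = (1 / 2) * ((f P - f Q) ⬝ᵥ γ.mulVec (f P - f Q)))
    (P0 Pi Pk : Ω) :
    wsp W P0 Pi Pk = (f Pi - f P0) ⬝ᵥ γ.mulVec (f Pk - f P0) := by
  have h2 : f P0 - f Pk = -(f Pk - f P0) := by abel
  have h3 : f Pi - f Pk = (f Pi - f P0) - (f Pk - f P0) := by abel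
  rw [wsp, hW, hW, hW, h2, h3]
  simp only [Matrix.mulVec_sub, Matrix.mulVec_neg, dotProduct_sub,
    sub_dotProduct, dotProduct_neg, neg_dotProduct, neg_neg]
  have c1 := q_comm γ hs (f P0) (f Pi)
  have c2 := q_comm γ hs (f P0) (f Pk)
  have c3 := q_comm γ hs (f Pk) (f Pi)
  linarith

lemma gram_eq (W : Ω → Ω → ℝ) (f : Ω → (Fin n → ℝ)) (γ : Matrix (Fin n) (Fin n) ℝ)
    (hs : γ.IsSymm)
    (hW : ∀ P Q, W P Q = (1 / 2) * ((f P - f Q) ⬝ᵥ γ.mulVec (f P - f Q)))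
    (m : ℕ) (Q : Fin (m + 1) → Ω) :
    (Matrix.of fun i k : Fin m => wsp W (Q 0) (Q i.succ) (Q k.succ)) =
      (Matrix.of fun (i : Fin m) (a : Fin n) => f (Q i.succ) a - f (Q 0) a) * γ *
        (Matrix.of fun (i : Fin m) (a : Fin n) => f (Q i.succ) a - f (Q 0) a)ᵀ := by
  ext i k
  rw [Matrix.of_apply, wsp_eq W f γ hs hW]
  simp only [Matrix.mul_apply, Matrix.transpose_apply, Matrix.of_apply, dotProduct,
    Matrix.mulVec, Pi.sub_apply, Finset.sum_mul, Finset.mul_sum]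
  rw [Finset.sum_comm]
  exact Finset.sum_congr rfl fun a _ => Finset.sum_congr rfl fun b _ => by ring

lemma det_rect_zero {m k : ℕ} (h : k < m) (A : Matrix (Fin m) (Fin k) ℝ)
    (B : Matrix (Fin k) (Fin m) ℝ) : (A * B).det = 0 := by
  by_contra hd
  have hu : IsUnit (A * B) := (Matrix.isUnit_iff_isUnit_det _).mpr (isUnit_iff_ne_zero.mpr hd)
  have h1 := Matrix.rank_of_isUnit _ hu
  have h2 : (A * B).rank ≤ k := le_trans (Matrix.rank_mul_le_left A B) (A.rank_le_width)
  rw [h1] at h2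
  simp only [Fintype.card_fin] at h2
  omega

end Aux

/-- **Theorem 2** (σ-immanent Euclideaness criterion).  The Σ-space `(Ω, W)` is the
`n`-dimensional (pseudo-)Euclidean space if and only if the σ-immanent conditions
I–IV are fulfilled. -/
theorem euclideaness_criterion
    (Ω : Type) [Nonempty Ω] (n : ℕ) (hn : 1 ≤ n)
    (W : Ω → Ω → ℝ) (hzero : ∀ P, W P P = 0) :
    (∃ (f : Ω ≃ (Fin n → ℝ)) (γ : Matrix (Fin n) (Fin n) ℝ),
        γ.IsSymm ∧ IsUnit γ.det ∧
        ∀ P Q : Ω, W P Q =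
          (1 / 2) * ∑ i : Fin n, ∑ k : Fin n,
            γ i k * (f P i - f Q i) * (f P k - f Q k)) ↔
    ((∀ P Q : Ω, W P Q = W Q P) ∧
      ∃ Pn : Fin (n + 1) → Ω,
        (Fdet W n Pn ≠ 0 ∧ ∀ Q : Fin (n + 2) → Ω, Fdet W (n + 1) Q = 0) ∧
        (∀ P Q : Ω, W P Q =
          (1 / 2) * ∑ i : Fin n, ∑ k : Fin n,
            (Matrix.of fun a b : Fin n => wsp W (Pn 0) (Pn a.succ) (Pn b.succ))⁻¹ i k *
              (wsp W (Pn 0) (Pn i.succ) P - wsp W (Pn 0) (Pn i.succ) Q) *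
              (wsp W (Pn 0) (Pn k.succ) P - wsp W (Pn 0) (Pn k.succ) Q)) ∧
        Function.Bijective (fun (P : Ω) (i : Fin n) => wsp W (Pn 0) (Pn i.succ) P)) := by
  constructor
  · rintro ⟨f, γ, hs, hud, hW0⟩
    have hγd : γ.det ≠ 0 := hud.ne_zero
    -- matrix form of the hypothesis
    have hW : ∀ P Q, W P Q = (1 / 2) * ((f P - f Q) ⬝ᵥ γ.mulVec (f P - f Q)) := by
      intro P Q
      have h := dsum_eq γ (f P - f Q) (f P - f Q)
      simp only [Pi.sub_apply] at h
      rw [hW0, h]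
    -- condition I
    refine ⟨?_, ?_⟩
    · intro P Q
      rw [hW0 P Q, hW0 Q P]
      congr 1
      exact Finset.sum_congr rfl fun i _ => Finset.sum_congr rfl fun k _ => by ring
    -- the reference points
    · set Pn : Fin (n + 1) → Ω :=
        fun j => f.symm (fun i : Fin n => if (i.succ : Fin (n + 1)) = j then 1 else 0) with hPn
      have hP0 : f (Pn 0) = 0 := by
        rw [hPn, Equiv.apply_symm_apply]
        funext i
        simp [Fin.succ_ne_zero]
      have hPs : ∀ a : Fin n, f (Pn a.succ) = Pi.single a 1 := by
        intro a
        rw [hPn, Equiv.apply_symm_apply]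
        funext i
        simp [Fin.succ_inj, Pi.single_apply]
      -- the Gram matrix at Pn is γ
      have hmat : (Matrix.of fun a b : Fin n =>
          wsp W (Pn 0) (Pn a.succ) (Pn b.succ)) = γ := by
        ext a b
        rw [Matrix.of_apply, wsp_eq W f γ hs hW, hP0, hPs, hPs]
        simp [Matrix.mulVec_single, single_dotProduct]
      -- the coordinate map
      have hx : ∀ P : Ω, (fun i : Fin n => wsp W (Pn 0) (Pn i.succ) P) = γ.mulVec (f P) := by
        intro P
        funext i
        rw [wsp_eq W f γ hs hW, hP0, hPs]
        simp [single_dotProduct, Matrix.mulVec]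
      refine ⟨Pn, ⟨?_, ?_⟩, ?_, ?_⟩
      · -- F_n(Pn) ≠ 0
        show (Matrix.of fun i k : Fin n =>
          wsp W (Pn 0) (Pn i.succ) (Pn k.succ)).det ≠ 0
        rw [hmat]; exact hγd
      · -- F_{n+1}(Q) = 0
        intro Q
        show (Matrix.of fun i k : Fin (n + 1) =>
          wsp W (Q 0) (Q i.succ) (Q k.succ)).det = 0
        rw [gram_eq W f γ hs hW (n + 1) Q]
        exact det_rect_zero (Nat.lt_succ_self n) _ _
      · -- condition III
        intro P Q
        rw [hW]
        have hsum := dsum_eq ((Matrix.of fun a b : Fin n =>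
            wsp W (Pn 0) (Pn a.succ) (Pn b.succ))⁻¹)
          (fun i => wsp W (Pn 0) (Pn i.succ) P - wsp W (Pn 0) (Pn i.succ) Q)
          (fun i => wsp W (Pn 0) (Pn i.succ) P - wsp W (Pn 0) (Pn i.succ) Q)
        rw [hsum, hmat]
        congr 1
        have hd : (fun i => wsp W (Pn 0) (Pn i.succ) P - wsp W (Pn 0) (Pn i.succ) Q)
            = γ.mulVec (f P - f Q) := by
          funext i
          have := congrFun (hx P) i
          have h2 := congrFun (hx Q) i
          rw [this, h2, Matrix.mulVec_sub, Pi.sub_apply]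
        rw [hd, Matrix.mulVec_mulVec, Matrix.nonsing_inv_mul γ (isUnit_iff_ne_zero.mpr hγd),
          Matrix.one_mulVec, dotProduct_comm]
      · -- condition IV
        have : (fun (P : Ω) (i : Fin n) => wsp W (Pn 0) (Pn i.succ) P)
            = fun P => γ.mulVec (f P) := funext hx
        rw [this]
        refine Function.bijective_iff_has_inverse.mpr
          ⟨fun v => f.symm (γ⁻¹.mulVec v), fun P => ?_, fun v => ?_⟩
        · show f.symm (γ⁻¹.mulVec (γ.mulVec (f P))) = P
          rw [Matrix.mulVec_mulVec, Matrix.nonsing_inv_mul γ (isUnit_iff_ne_zero.mpr hγd),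
            Matrix.one_mulVec, Equiv.symm_apply_apply]
        · show γ.mulVec (f (f.symm (γ⁻¹.mulVec v))) = v
          rw [Equiv.apply_symm_apply, Matrix.mulVec_mulVec,
            Matrix.mul_nonsing_inv γ (isUnit_iff_ne_zero.mpr hγd), Matrix.one_mulVec]
  · rintro ⟨hsymm, Pn, ⟨hFn, _⟩, hIII, hIV⟩
    set g : Matrix (Fin n) (Fin n) ℝ :=
      Matrix.of fun a b : Fin n => wsp W (Pn 0) (Pn a.succ) (Pn b.succ) with hg
    have hgdet : g.det ≠ 0 := hFn
    have hgu : IsUnit g.det := isUnit_iff_ne_zero.mpr hgdet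
    have hgs : g.IsSymm := by
      unfold Matrix.IsSymm
      ext a b
      simp only [Matrix.transpose_apply, hg, Matrix.of_apply, wsp]
      rw [hsymm (Pn b.succ) (Pn 0), hsymm (Pn 0) (Pn a.succ), hsymm (Pn b.succ) (Pn a.succ)]
      ring
    refine ⟨Equiv.ofBijective _ hIV, g⁻¹, ?_, ?_, ?_⟩
    · show (g⁻¹)ᵀ = g⁻¹
      rw [Matrix.transpose_nonsing_inv, hgs]
    · exact Matrix.isUnit_nonsing_inv_det g hgu
    · exact fun P Q => hIII P Q
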